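/- arXiv:2307.05701 — 7 statements merged into one kernel-verified Lean document; each statement's English description precedes it below -/
import Mathlib

section
/- A graph G with m edges has an independent set of size k if and only if the 2-subdivision of G (obtained by replacing each edge uv with a path u–w_{uv}–w_{vu}–v of length 3) has an independent set of size k + m. -/
/-!
An independent set `I` of `G` extends to one of the 2-subdivision by adding, on every edge, the
subdivision vertex next to an endpoint outside `I`: this adds exactly `m` pairwise non-adjacent
vertices. Conversely, an independent set `J` of the 2-subdivision uses at most one subdivision
vertex per edge and none on the `t` edges with both ends in `A = J ∩ V`, so `|J| ≤ |A| + m - t`;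
deleting one endpoint of each of those `t` edges from `A` leaves an independent set of `G` of size
at least `|J| - m`.
-/

/-- The 2-subdivision of a graph `G`: every edge `uv` is replaced by the path
`u — w_{uv} — w_{vu} — v`, where the subdivision vertex `w_{uv}` is encoded as the
ordered pair `(u, v)` (with a proof that `uv` is an edge). -/
def twoSubdivision {V : Type*} (G : SimpleGraph V) :
    SimpleGraph (V ⊕ {p : V × V // G.Adj p.1 p.2}) where
  Adj x y :=
    match x, y with
    | Sum.inl u, Sum.inl _ => False
    | Sum.inl u, Sum.inr w => u = w.1.1
    | Sum.inr w, Sum.inl u => u = w.1.1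
    | Sum.inr w₁, Sum.inr w₂ => w₁.1.1 = w₂.1.2 ∧ w₁.1.2 = w₂.1.1
  symm := by
    refine ⟨?_⟩
    rintro (u | w) (v | w') h
    · exact h
    · exact h
    · exact h
    · exact ⟨h.2.symm, h.1.symm⟩
  loopless := by
    refine ⟨?_⟩
    rintro (u | w) h
    · exact h
    · have := w.2
      rw [h.1] at this
      exact G.loopless.irrefl _ this

open Finset

section
variable {V : Type*} {G : SimpleGraph V}

@[simp] lemma twoSubdivision_adj_inl_inl {u v : V} :
    ¬ (twoSubdivision G).Adj (.inl u) (.inl v) := id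

@[simp] lemma twoSubdivision_adj_inl_inr {u : V} {w : {p : V × V // G.Adj p.1 p.2}} :
    (twoSubdivision G).Adj (.inl u) (.inr w) ↔ u = w.1.1 := Iff.rfl

@[simp] lemma twoSubdivision_adj_inr_inl {u : V} {w : {p : V × V // G.Adj p.1 p.2}} :
    (twoSubdivision G).Adj (.inr w) (.inl u) ↔ u = w.1.1 := Iff.rfl

@[simp] lemma twoSubdivision_adj_inr_inr {w w' : {p : V × V // G.Adj p.1 p.2}} :
    (twoSubdivision G).Adj (.inr w) (.inr w') ↔ w'.1 = w.1.swap := by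
  rw [Prod.ext_iff]
  exact ⟨fun h => ⟨h.2.symm, h.1.symm⟩, fun h => ⟨h.2.symm, h.1.symm⟩⟩

lemma injOn_sym2Mk_iff {S : Finset {p : V × V // G.Adj p.1 p.2}} :
    Set.InjOn (fun w : {p : V × V // G.Adj p.1 p.2} => s(w.1.1, w.1.2)) S ↔
      ∀ w ∈ S, ∀ w' ∈ S, w'.1 ≠ w.1.swap := by
  constructor
  · intro hinj w hw w' hw' hswap
    obtain rfl : w = w' := hinj hw hw' (by simp [hswap, Sym2.eq_swap])
    exact w.2.ne (congrArg Prod.fst hswap)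
  · intro h w hw w' hw' heq
    rcases Sym2.mk_eq_mk_iff.1 heq with h' | h'
    · exact Subtype.ext h'
    · exact absurd h' (h w' hw' w hw)

lemma twoSubdivision_indep_disjSum_iff {A : Finset V}
    {S : Finset {p : V × V // G.Adj p.1 p.2}} :
    (∀ x ∈ A.disjSum S, ∀ y ∈ A.disjSum S, ¬ (twoSubdivision G).Adj x y) ↔
      (∀ w ∈ S, w.1.1 ∉ A) ∧
        Set.InjOn (fun w : {p : V × V // G.Adj p.1 p.2} => s(w.1.1, w.1.2)) S := by
  rw [injOn_sym2Mk_iff]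
  simp only [Sum.forall, inl_mem_disjSum, inr_mem_disjSum, twoSubdivision_adj_inl_inl,
    twoSubdivision_adj_inl_inr, twoSubdivision_adj_inr_inl, twoSubdivision_adj_inr_inr]
  grind

lemma exists_darts_card_eq_of_indep [Fintype V] [DecidableRel G.Adj] {I : Finset V}
    (hI : ∀ u ∈ I, ∀ v ∈ I, ¬ G.Adj u v) :
    ∃ S : Finset {p : V × V // G.Adj p.1 p.2}, (∀ w ∈ S, w.1.1 ∉ I) ∧
      Set.InjOn (fun w : {p : V × V // G.Adj p.1 p.2} => s(w.1.1, w.1.2)) S ∧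
      #S = #G.edgeFinset := by
  have hdart : ∀ e : G.edgeSet, ∃ w : {p : V × V // G.Adj p.1 p.2},
      s(w.1.1, w.1.2) = e ∧ w.1.1 ∉ I := by
    rintro ⟨e, he⟩
    induction e using Sym2.ind with | _ u v => ?_
    by_cases hu : u ∈ I
    · exact ⟨⟨(v, u), he.symm⟩, Sym2.eq_swap, fun hv => hI u hu v hv he⟩
    · exact ⟨⟨(u, v), he⟩, rfl, hu⟩
  choose f hf_edge hf_out using hdart
  have hf_inj : Function.Injective f := fun e e' h => Subtype.ext <| by
    rw [← hf_edge, h, hf_edge]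
  refine ⟨univ.map ⟨f, hf_inj⟩, ?_, ?_, ?_⟩
  · intro w hw
    obtain ⟨e, -, rfl⟩ := mem_map.1 hw
    exact hf_out e
  · simp only [coe_map, coe_univ, Set.image_univ, Function.Embedding.coeFn_mk]
    rintro _ ⟨e, rfl⟩ _ ⟨e', rfl⟩ h
    exact congrArg f (Subtype.ext ((hf_edge e).symm.trans (h.trans (hf_edge e'))))
  · rw [card_map, card_univ, G.edgeFinset_card]

lemma card_le_card_edgeFinset_sdiff_sym2 [Fintype V] [DecidableEq V] [DecidableRel G.Adj]
    {A : Finset V}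
    {S : Finset {p : V × V // G.Adj p.1 p.2}} (hout : ∀ w ∈ S, w.1.1 ∉ A)
    (hinj : Set.InjOn (fun w : {p : V × V // G.Adj p.1 p.2} => s(w.1.1, w.1.2)) S) :
    #S ≤ #(G.edgeFinset \ A.sym2) :=
  card_le_card_of_injOn _ (fun w hw => by simp [w.2, hout w hw]) hinj

lemma exists_indep_subset_card_le_card_add [Fintype V] [DecidableEq V] [DecidableRel G.Adj]
    (A : Finset V) :
    ∃ I ⊆ A, (∀ u ∈ I, ∀ v ∈ I, ¬ G.Adj u v) ∧
      #A ≤ #I + #(G.edgeFinset ∩ A.sym2) := by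
  set B := (G.edgeFinset ∩ A.sym2).image (fun e => e.out.1)
  refine ⟨A \ B, sdiff_subset, ?_, ?_⟩
  · intro u hu v hv huv
    rw [mem_sdiff] at hu hv
    have he : s(u, v) ∈ G.edgeFinset ∩ A.sym2 := by simp [huv, hu.1, hv.1]
    have hB : s(u, v).out.1 ∈ B := mem_image_of_mem _ he
    rcases Sym2.mem_iff.1 (Sym2.out_fst_mem s(u, v)) with h | h
    · exact hu.2 (h ▸ hB)
    · exact hv.2 (h ▸ hB)
  · calc #A ≤ #(A \ B) + #B := card_le_card_sdiff_add_card
      _ ≤ #(A \ B) + #(G.edgeFinset ∩ A.sym2) := by gcongr; exact card_image_le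

end

theorem independent_set_two_subdivision_general {V : Type*} [Fintype V]
    (G : SimpleGraph V) [DecidableRel G.Adj] (k m : ℕ) (hm : m = G.edgeFinset.card) :
    (∃ I : Finset V, (∀ u ∈ I, ∀ v ∈ I, ¬ G.Adj u v) ∧ I.card = k) ↔
    (∃ J : Finset (V ⊕ {p : V × V // G.Adj p.1 p.2}),
        (∀ x ∈ J, ∀ y ∈ J, ¬ (twoSubdivision G).Adj x y) ∧ J.card = k + m) := by
  classical
  constructor
  · rintro ⟨I, hI, rfl⟩
    obtain ⟨S, hout, hinj, hcard⟩ := exists_darts_card_eq_of_indep hI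
    exact ⟨I.disjSum S, twoSubdivision_indep_disjSum_iff.2 ⟨hout, hinj⟩,
      by rw [card_disjSum, hcard, hm]⟩
  · rintro ⟨J, hJ, hJcard⟩
    rw [← J.toLeft_disjSum_toRight] at hJ
    obtain ⟨hout, hinj⟩ := twoSubdivision_indep_disjSum_iff.1 hJ
    obtain ⟨I, -, hI, hAI⟩ := exists_indep_subset_card_le_card_add (G := G) J.toLeft
    have hS := card_le_card_edgeFinset_sdiff_sym2 hout hinj
    have hJ_split := J.card_toLeft_add_card_toRight
    have hm_split := card_sdiff_add_card_inter G.edgeFinset J.toLeft.sym2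
    obtain ⟨I', hI'I, hI'card⟩ := exists_subset_card_eq (show k ≤ #I by omega)
    exact ⟨I', fun u hu v hv => hI u (hI'I hu) v (hI'I hv), hI'card⟩

/-- Poljak: a graph `G` with `m` edges has an independent set of size `k`
iff its 2-subdivision has an independent set of size `k + m`. -/
theorem independent_set_two_subdivision {V : Type*} [Fintype V] [DecidableEq V]
    (G : SimpleGraph V) [DecidableRel G.Adj] (k m : ℕ) (hm : m = G.edgeFinset.card) :
    (∃ I : Finset V, (∀ u ∈ I, ∀ v ∈ I, ¬ G.Adj u v) ∧ I.card = k) ↔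
    (∃ J : Finset (V ⊕ {p : V × V // G.Adj p.1 p.2}),
        (∀ x ∈ J, ∀ y ∈ J, ¬ (twoSubdivision G).Adj x y) ∧ J.card = k + m) :=
  independent_set_two_subdivision_general G k m hm
end

section
/- Let G' = (V,E') be a graph and T ⊆ V such that G'[V \ T] has no edges. Then a set S ⊆ V is a T-vertex cover of G' if and only if S = R ∪ W for some minimal vertex cover R of G'[T] and some vertex cover W of G'[V \ R]. -/
/-!
Since every edge meets `T`, a `T`-vertex cover is just a vertex cover of `G'`. Inside a vertex
cover `S`, Zorn's lemma gives a minimal vertex cover `R ⊆ S ∩ T` of `G'[T]`, and `S \ R` covers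
`G'[V \ R]`. Conversely, `R ∪ W` covers every edge: one avoiding `R` lies in `G'[V \ R]`.
-/

namespace SimpleGraph

variable {V : Type*} (G : SimpleGraph V)

/-- `C` is a vertex cover of the induced subgraph `G[A]`. -/
def IsVertexCoverOn (A C : Set V) : Prop :=
  ∀ u v, u ∈ A → v ∈ A → G.Adj u v → u ∈ C ∨ v ∈ C

variable {G}

theorem IsVertexCover.isVertexCoverOn_inter {A C : Set V} (hC : G.IsVertexCover C) :
    G.IsVertexCoverOn A (C ∩ A) :=
  fun _ _ hu hv h ↦ (hC h).imp (⟨·, hu⟩) (⟨·, hv⟩)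

theorem IsVertexCover.isVertexCoverOn_compl_diff {C : Set V} (hC : G.IsVertexCover C)
    (R : Set V) : G.IsVertexCoverOn Rᶜ (C \ R) :=
  fun _ _ hu hv h ↦ (hC h).imp (⟨·, hu⟩) (⟨·, hv⟩)

theorem IsVertexCoverOn.isVertexCover_union {R W : Set V} (hW : G.IsVertexCoverOn Rᶜ W) :
    G.IsVertexCover (R ∪ W) := by
  intro u v h
  by_cases hu : u ∈ R
  · exact Or.inl (Or.inl hu)
  by_cases hv : v ∈ R
  · exact Or.inr (Or.inl hv)
  exact (hW u v hu hv h).imp Or.inr Or.inr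

/-- If an edge escapes `⋂₀ c`, it avoids one member of `c` at each endpoint, and the smaller of
the two misses both endpoints. -/
theorem isVertexCoverOn_sInter_of_isChain {A : Set V} {c : Set (Set V)}
    (hc : ∀ C ∈ c, G.IsVertexCoverOn A C) (hchain : IsChain (· ⊆ ·) c) :
    G.IsVertexCoverOn A (⋂₀ c) := by
  intro u v hu hv h
  by_contra! hmiss
  obtain ⟨Cu, hCu, huCu⟩ : ∃ Cu ∈ c, u ∉ Cu := by simpa [Set.mem_sInter] using hmiss.1
  obtain ⟨Cv, hCv, hvCv⟩ : ∃ Cv ∈ c, v ∉ Cv := by simpa [Set.mem_sInter] using hmiss.2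
  rcases hchain.total hCu hCv with hsub | hsub
  · exact (hc Cu hCu u v hu hv h).elim huCu fun hv' ↦ hvCv (hsub hv')
  · exact (hc Cv hCv u v hu hv h).elim (fun hu' ↦ huCu (hsub hu')) hvCv

theorem IsVertexCoverOn.exists_minimal_subset {A C : Set V} (hC : G.IsVertexCoverOn A C) :
    ∃ R ⊆ C, Minimal (G.IsVertexCoverOn A) R :=
  zorn_superset_nonempty {D | G.IsVertexCoverOn A D}
    (fun c hc hchain _ ↦ ⟨⋂₀ c, isVertexCoverOn_sInter_of_isChain hc hchain,
      fun _ ↦ Set.sInter_subset_of_mem⟩) C hC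

theorem isVertexCover_of_forall_not_adj {T S : Set V}
    (hout : ∀ u v, u ∉ T → v ∉ T → ¬ G.Adj u v)
    (hS : ∀ u v, G.Adj u v → (u ∈ T ∨ v ∈ T) → (u ∈ S ∨ v ∈ S)) :
    G.IsVertexCover S := by
  intro u v h
  refine hS u v h ?_
  by_contra! hT
  exact hout u v hT.1 hT.2 h

end SimpleGraph

/-- for a graph `G'` and `T ⊆ V` with `G'[V \ T]` edgeless, a set `S` is a
`T`-vertex cover of `G'` iff `S = R ∪ W` for a minimal vertex cover `R` of `G'[T]` and a
vertex cover `W` of `G'[V \ R]`. -/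
theorem subset_vertex_cover_decomposition {V : Type*} (G' : SimpleGraph V) (T : Set V)
    (hout : ∀ u v, u ∉ T → v ∉ T → ¬ G'.Adj u v) (S : Set V) :
    (∀ u v, G'.Adj u v → (u ∈ T ∨ v ∈ T) → (u ∈ S ∨ v ∈ S)) ↔
    (∃ R W : Set V,
      R ⊆ T ∧
      (∀ u v, u ∈ T → v ∈ T → G'.Adj u v → (u ∈ R ∨ v ∈ R)) ∧
      (∀ R' : Set V, R' ⊂ R → ¬ (∀ u v, u ∈ T → v ∈ T → G'.Adj u v → (u ∈ R' ∨ v ∈ R'))) ∧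
      W ⊆ Rᶜ ∧
      (∀ u v, u ∉ R → v ∉ R → G'.Adj u v → (u ∈ W ∨ v ∈ W)) ∧
      S = R ∪ W) := by
  constructor
  · intro hS
    have hcover : G'.IsVertexCover S := G'.isVertexCover_of_forall_not_adj hout hS
    obtain ⟨R, hRST, hR⟩ := (hcover.isVertexCoverOn_inter (A := T)).exists_minimal_subset
    exact ⟨R, S \ R, fun _ hx ↦ (hRST hx).2, hR.prop, fun _ ↦ hR.not_prop_of_ssubset,
      fun _ hx ↦ hx.2, hcover.isVertexCoverOn_compl_diff R,
      (Set.union_sdiff_cancel fun _ hx ↦ (hRST hx).1).symm⟩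
  · rintro ⟨R, W, -, -, -, -, hW, rfl⟩ u v h -
    exact SimpleGraph.IsVertexCoverOn.isVertexCover_union hW h
end

section
/- Let G be a (P_2+P_3)-free graph, uv an edge of G, and T' the set of vertices adjacent to neither u nor v. Suppose the induced subgraph G[T'] has at least three connected components D_1, ..., D_p (p ≥ 3), each with at least two vertices. If a vertex w ∉ T' ∪ {u,v} has both a neighbour and a non-neighbour in some D_i, then for every j ∈ {1,...,p}, w is adjacent to all vertices of D_j except at most one. -/
/-!
Since `uv` is an edge with no neighbour in `T'`, the graph `G[T']` has no induced `P₃`, so each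
`D k` is a clique, and there are no edges between different `D k`. Two adjacent vertices that both
miss an induced path `c — d — e` would complete it to an induced `P₂ + P₃`, so all but at most one
vertex of a clique meet the neighbourhood of such a path. For `j ≠ i` take the path `y — x — w`.
For `D i` itself, `w` has a neighbour `c` in some other component (which has two vertices), and a
neighbour `z ∈ {u, v}` because `w ∉ T'`; take the path `c — w — z`.
-/

/-- A graph is `(P₂ + P₃)`-free: it contains no five vertices inducing the disjoint union of
an edge `ab` and a path `c — d — e`. -/
def P2P3Free {V : Type*} (G : SimpleGraph V) : Prop :=
  ¬ ∃ a b c d e : V,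
      a ≠ b ∧ a ≠ c ∧ a ≠ d ∧ a ≠ e ∧ b ≠ c ∧ b ≠ d ∧ b ≠ e ∧ c ≠ d ∧ c ≠ e ∧ d ≠ e ∧
      G.Adj a b ∧ G.Adj c d ∧ G.Adj d e ∧
      ¬ G.Adj a c ∧ ¬ G.Adj a d ∧ ¬ G.Adj a e ∧
      ¬ G.Adj b c ∧ ¬ G.Adj b d ∧ ¬ G.Adj b e ∧ ¬ G.Adj c e

theorem SimpleGraph.Reachable.adj_of_ne {V : Type*} {G : SimpleGraph V}
    (htrans : ∀ {a b c : V}, G.Adj a b → G.Adj b c → a ≠ c → G.Adj a c)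
    {x y : V} (h : G.Reachable x y) (hxy : x ≠ y) : G.Adj x y := by
  obtain ⟨p⟩ := h
  induction p with
  | nil => exact absurd rfl hxy
  | @cons x z y hxz _ ih =>
    rcases eq_or_ne z y with rfl | hzy
    · exact hxz
    · exact htrans hxz (ih hzy) hxy

theorem Set.Subsingleton.exists_forall_ne_mem {α : Type*} [Nonempty α] {s t : Set α}
    (h : (s \ t).Subsingleton) : ∃ z, ∀ x ∈ s, x ≠ z → x ∈ t := by
  rcases h.eq_empty_or_singleton with h | ⟨z, hz⟩
  · exact ⟨Classical.arbitrary α, fun x hx _ => by_contra fun hxt => h.subset ⟨hx, hxt⟩⟩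
  · exact ⟨z, fun x hx hxz => by_contra fun hxt => hxz (hz.subset ⟨hx, hxt⟩)⟩

theorem Set.Nontrivial.exists_mem_of_subsingleton_diff {α : Type*} {s t : Set α}
    (hs : s.Nontrivial) (h : (s \ t).Subsingleton) : ∃ x ∈ s, x ∈ t := by
  by_contra! hst
  obtain ⟨a, ha, b, hb, hab⟩ := hs
  exact hab (h ⟨ha, hst a ha⟩ ⟨hb, hst b hb⟩)

namespace P2P3Free

variable {V : Type*} {G : SimpleGraph V}

theorem not_adj_of_induced_path (hG : P2P3Free G) {a b c d e : V}
    (hcd : G.Adj c d) (hde : G.Adj d e) (hce : ¬ G.Adj c e) (hne : c ≠ e)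
    (ha : ¬ G.Adj c a ∧ ¬ G.Adj d a ∧ ¬ G.Adj e a)
    (hb : ¬ G.Adj c b ∧ ¬ G.Adj d b ∧ ¬ G.Adj e b) : ¬ G.Adj a b := by
  obtain ⟨hca, hda, hea⟩ := ha
  obtain ⟨hcb, hdb, heb⟩ := hb
  intro hab
  refine hG ⟨a, b, c, d, e, hab.ne, ?_, ?_, ?_, ?_, ?_, ?_, hcd.ne, hne, hde.ne, hab, hcd, hde,
    fun h => hca h.symm, fun h => hda h.symm, fun h => hea h.symm,
    fun h => hcb h.symm, fun h => hdb h.symm, fun h => heb h.symm, hce⟩ <;>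
  rintro rfl <;> simp_all [G.adj_comm]

theorem adj_of_induce_reachable (hG : P2P3Free G) {u v : V} (huv : G.Adj u v) {S : Set V}
    (hS : ∀ s ∈ S, ¬ G.Adj s u ∧ ¬ G.Adj s v) {x y : S} (h : (G.induce S).Reachable x y)
    (hxy : x ≠ y) : G.Adj x y := by
  refine h.adj_of_ne (fun {a b c} hab hbc hac => by_contra fun hac' => ?_) hxy
  exact hG.not_adj_of_induced_path hab hbc hac' (Subtype.coe_ne_coe.mpr hac)
    ⟨(hS a a.2).1, (hS b b.2).1, (hS c c.2).1⟩ ⟨(hS a a.2).2, (hS b b.2).2, (hS c c.2).2⟩ huv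

theorem subsingleton_clique_diff_neighborSet (hG : P2P3Free G) {c d e : V}
    (hcd : G.Adj c d) (hde : G.Adj d e) (hce : ¬ G.Adj c e) (hne : c ≠ e) {C : Set V}
    (hC : G.IsClique C) {w : V}
    (hCw : ∀ t ∈ C, ¬ G.Adj w t → ¬ G.Adj c t ∧ ¬ G.Adj d t ∧ ¬ G.Adj e t) :
    (C \ G.neighborSet w).Subsingleton := by
  rintro a ⟨haC, ha⟩ b ⟨hbC, hb⟩
  by_contra hab
  exact hG.not_adj_of_induced_path hcd hde hce hne (hCw a haC ha) (hCw b hbC hb) (hC haC hbC hab)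

end P2P3Free

/-- in a `(P₂+P₃)`-free graph with an edge `uv`, let `T'` be the vertices
adjacent to neither `u` nor `v`, and let `D 0, …, D (p-1)` (`p ≥ 3`) be connected components
of `G[T']` each with at least two vertices. If a vertex `w ∉ T' ∪ {u,v}` has both a
neighbour and a non-neighbour in some `D i`, then `w` is semi-complete to every `D j`:
adjacent to all vertices of `D j` except at most one. -/
theorem semi_complete_of_neighbour_and_nonneighbour {V : Type*} (G : SimpleGraph V)
    (hfree : P2P3Free G) (u v : V) (huv : G.Adj u v)
    (T' : Set V) (hT' : T' = {x | x ≠ u ∧ x ≠ v ∧ ¬ G.Adj x u ∧ ¬ G.Adj x v})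
    (p : ℕ) (hp : 3 ≤ p) (D : Fin p → Set V)
    (hDsub : ∀ i, D i ⊆ T')
    (hDconn : ∀ i, ∀ x, ∀ hx : x ∈ D i, ∀ y, ∀ hy : y ∈ D i,
      (G.induce T').Reachable ⟨x, hDsub i hx⟩ ⟨y, hDsub i hy⟩)
    (hDclosed : ∀ i, ∀ x ∈ D i, ∀ y ∈ T', G.Adj x y → y ∈ D i)
    (hDdisj : ∀ i j, i ≠ j → Disjoint (D i) (D j))
    (hDbig : ∀ i, ∃ x ∈ D i, ∃ y ∈ D i, x ≠ y)
    (w : V) (hwT' : w ∉ T') (hwu : w ≠ u) (hwv : w ≠ v)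
    (i : Fin p) (x y : V) (hx : x ∈ D i) (hy : y ∈ D i)
    (hwx : G.Adj w x) (hwy : ¬ G.Adj w y) :
    ∀ j : Fin p, ∃ z : V, ∀ t ∈ D j, t ≠ z → G.Adj w t := by
  have hT'uv : ∀ z ∈ ({u, v} : Set V), ∀ t ∈ T', t ≠ z ∧ ¬ G.Adj t z := by
    subst hT'
    rintro z (rfl | rfl) t ⟨htu, htv, htu', htv'⟩ <;> tauto
  obtain ⟨z, hz, hwz⟩ : ∃ z ∈ ({u, v} : Set V), G.Adj w z := by
    subst hT'
    by_contra! h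
    exact hwT' ⟨hwu, hwv, h u (by simp), h v (by simp)⟩
  have hclique (k : Fin p) : G.IsClique (D k) := fun a ha b hb hab =>
    hfree.adj_of_induce_reachable huv
      (fun t ht => ⟨(hT'uv u (by simp) t ht).2, (hT'uv v (by simp) t ht).2⟩)
      (hDconn k a ha b hb) (by simpa using hab)
  have hcross {k l : Fin p} (hkl : k ≠ l) {a b : V} (ha : a ∈ D k) (hb : b ∈ D l) :
      ¬ G.Adj a b := fun hab =>
    Set.disjoint_left.mp (hDdisj k l hkl) (hDclosed k a ha b (hDsub l hb) hab) hb
  have hother (j : Fin p) (hji : j ≠ i) : (D j \ G.neighborSet w).Subsingleton :=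
    hfree.subsingleton_clique_diff_neighborSet (hclique i hy hx fun h => hwy (h ▸ hwx)) hwx.symm
      (fun h => hwy h.symm) (fun h => hwT' (h ▸ hDsub i hy)) (hclique j) fun t ht hwt =>
        ⟨fun h => hcross hji ht hy h.symm, fun h => hcross hji ht hx h.symm, hwt⟩
  have hself : (D i \ G.neighborSet w).Subsingleton := by
    obtain ⟨k, hki, -⟩ := Fin.exists_ne_and_ne_of_two_lt i i hp
    obtain ⟨c, hc, hwc⟩ : ∃ c ∈ D k, G.Adj w c :=
      Set.Nontrivial.exists_mem_of_subsingleton_diff (hDbig k) (hother k hki)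
    obtain ⟨hcz_ne, hcz⟩ := hT'uv z hz c (hDsub k hc)
    exact hfree.subsingleton_clique_diff_neighborSet hwc.symm hwz hcz hcz_ne (hclique i)
      fun t ht hwt => ⟨hcross hki hc ht, hwt, fun h => (hT'uv z hz t (hDsub i ht)).2 h.symm⟩
  have : Nonempty V := ⟨w⟩
  intro j
  rcases ne_or_eq j i with hji | rfl
  exacts [(hother j hji).exists_forall_ne_mem, hself.exists_forall_ne_mem]
end

section
/- Let G be a (P_2+P_3)-free graph, uv an edge of G, and T' the set of vertices adjacent to neither u nor v. Suppose G[T'] has at least three connected components D_1, ..., D_p (p ≥ 3) of size at least two each. If a vertex w ∉ T' ∪ {u,v} has a neighbour in D_i and a neighbour in D_j for some i ≠ j, then w is adjacent to all but at most one vertex of every D_l, l ∈ {1,...,p}. -/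
/-!
Let `T'` be the vertices anticomplete to the edge `uv`. Since `G` has no induced `P₂ + P₃`,
`G[T']` has no induced `P₃`, so each `D l` is a clique with no edges to the other components.
If `w` missed two vertices `a, b` of `D l` while having neighbours `x ∈ D m`, `y ∈ D m'` in two
further components, then `ab` together with `x — w — y` would be an induced `P₂ + P₃`.
As `p ≥ 3`, this first gives `w` a neighbour in a third component, and then for every `l` there
are two components other than `D l` in which `w` has a neighbour.
-/

namespace SimpleGraph

theorem Reachable.eq_or_adj_of_transitive {W : Type*} {H : SimpleGraph W}
    (htrans : ∀ ⦃a b c⦄, H.Adj a b → H.Adj b c → a ≠ c → H.Adj a c) {s t : W}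
    (h : H.Reachable s t) : s = t ∨ H.Adj s t := by
  obtain ⟨walk⟩ := h
  induction walk with
  | nil => exact Or.inl rfl
  | @cons a b c hab _ ih =>
    rcases ih with rfl | hbc
    · exact Or.inr hab
    · by_cases hac : a = c
      · exact Or.inl hac
      · exact Or.inr (htrans hab hbc hac)

end SimpleGraph

namespace P2P3Free

variable {V : Type*} {G : SimpleGraph V}

theorem adj_of_anticomplete_edge (hfree : P2P3Free G) {a b c d e : V}
    (hab : G.Adj a b) (hcd : G.Adj c d) (hde : G.Adj d e) (hce : c ≠ e)
    (hac : ¬ G.Adj a c) (had : ¬ G.Adj a d) (hae : ¬ G.Adj a e)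
    (hbc : ¬ G.Adj b c) (hbd : ¬ G.Adj b d) (hbe : ¬ G.Adj b e) : G.Adj c e := by
  by_contra hce'
  have hab' := hab.symm
  -- each required distinctness is forced by one adjacency and one non-adjacency
  refine hfree ⟨a, b, c, d, e, hab.ne, ?_, ?_, ?_, ?_, ?_, ?_, hcd.ne, hce, hde.ne,
    hab, hcd, hde, hac, had, hae, hbc, hbd, hbe, hce'⟩ <;> rintro rfl <;> contradiction

theorem induce_adj_trans (hfree : P2P3Free G) {u v : V} (huv : G.Adj u v) {T : Set V}
    (hT : ∀ t ∈ T, ¬ G.Adj u t ∧ ¬ G.Adj v t) ⦃a b c : T⦄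
    (hab : (G.induce T).Adj a b) (hbc : (G.induce T).Adj b c) (hac : a ≠ c) :
    (G.induce T).Adj a c :=
  hfree.adj_of_anticomplete_edge huv hab hbc (Subtype.coe_ne_coe.mpr hac)
    (hT a a.2).1 (hT b b.2).1 (hT c c.2).1 (hT a a.2).2 (hT b b.2).2 (hT c c.2).2

section Components

open Function

variable {ι : Type*} {D : ι → Set V}

theorem adj_or_adj_of_adj_two_others (hfree : P2P3Free G) (hdisj : Pairwise (Disjoint on D))
    (hsep : Pairwise fun m m' => ∀ a ∈ D m, ∀ b ∈ D m', ¬ G.Adj a b)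
    {l m m' : ι} (hlm : l ≠ m) (hlm' : l ≠ m') (hmm' : m ≠ m')
    {w a b x y : V} (ha : a ∈ D l) (hb : b ∈ D l) (hab : G.Adj a b)
    (hx : x ∈ D m) (hy : y ∈ D m') (hwx : G.Adj w x) (hwy : G.Adj w y) :
    G.Adj w a ∨ G.Adj w b := by
  by_contra! ⟨hwa, hwb⟩
  have hxy : x ≠ y := fun h => Set.disjoint_left.mp (hdisj hmm') hx (h ▸ hy)
  exact hsep hmm' x hx y hy (hfree.adj_of_anticomplete_edge hab hwx.symm hwy hxy
    (hsep hlm a ha x hx) (fun h => hwa h.symm) (hsep hlm' a ha y hy)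
    (hsep hlm b hb x hx) (fun h => hwb h.symm) (hsep hlm' b hb y hy))

theorem exists_adj_of_adj_two_others (hfree : P2P3Free G)
    (hclique : ∀ l, G.IsClique (D l)) (hdisj : Pairwise (Disjoint on D))
    (hsep : Pairwise fun m m' => ∀ a ∈ D m, ∀ b ∈ D m', ¬ G.Adj a b)
    {l m m' : ι} (hlm : l ≠ m) (hlm' : l ≠ m') (hmm' : m ≠ m')
    {w x y : V} (hl : ∃ a ∈ D l, ∃ b ∈ D l, a ≠ b)
    (hx : x ∈ D m) (hy : y ∈ D m') (hwx : G.Adj w x) (hwy : G.Adj w y) :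
    ∃ z ∈ D l, G.Adj w z := by
  by_contra! h
  obtain ⟨a, ha, b, hb, hab⟩ := hl
  exact (hfree.adj_or_adj_of_adj_two_others hdisj hsep hlm hlm' hmm' ha hb (hclique l ha hb hab)
    hx hy hwx hwy).elim (h a ha) (h b hb)

theorem semicomplete_of_adj_two_others (hfree : P2P3Free G)
    (hclique : ∀ l, G.IsClique (D l)) (hdisj : Pairwise (Disjoint on D))
    (hsep : Pairwise fun m m' => ∀ a ∈ D m, ∀ b ∈ D m', ¬ G.Adj a b)
    {l m m' : ι} (hlm : l ≠ m) (hlm' : l ≠ m') (hmm' : m ≠ m')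
    {w x y : V} (hx : x ∈ D m) (hy : y ∈ D m') (hwx : G.Adj w x) (hwy : G.Adj w y) :
    ∃ z, ∀ t ∈ D l, t ≠ z → G.Adj w t := by
  by_contra! h
  obtain ⟨a, ha, -, hwa⟩ := h w
  obtain ⟨b, hb, hba, hwb⟩ := h a
  exact (hfree.adj_or_adj_of_adj_two_others hdisj hsep hlm hlm' hmm' ha hb
    (hclique l hb ha hba).symm hx hy hwx hwy).elim hwa hwb

end Components

end P2P3Free

theorem semi_complete_of_neighbours_in_two_components_general {V : Type*} (G : SimpleGraph V)
    (hfree : P2P3Free G) (u v : V) (huv : G.Adj u v)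
    (T' : Set V) (hT' : T' = {x | x ≠ u ∧ x ≠ v ∧ ¬ G.Adj x u ∧ ¬ G.Adj x v})
    (p : ℕ) (hp : 3 ≤ p) (D : Fin p → Set V)
    (hDsub : ∀ i, D i ⊆ T')
    (hDconn : ∀ i, ∀ x, ∀ hx : x ∈ D i, ∀ y, ∀ hy : y ∈ D i,
      (G.induce T').Reachable ⟨x, hDsub i hx⟩ ⟨y, hDsub i hy⟩)
    (hDclosed : ∀ i, ∀ x ∈ D i, ∀ y ∈ T', G.Adj x y → y ∈ D i)
    (hDdisj : ∀ i j, i ≠ j → Disjoint (D i) (D j))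
    (hDbig : ∀ i, ∃ x ∈ D i, ∃ y ∈ D i, x ≠ y)
    (w : V)
    (i j : Fin p) (hij : i ≠ j) (x y : V) (hx : x ∈ D i) (hy : y ∈ D j)
    (hwx : G.Adj w x) (hwy : G.Adj w y) :
    ∀ l : Fin p, ∃ z : V, ∀ t ∈ D l, t ≠ z → G.Adj w t := by
  have hT : ∀ t ∈ T', ¬ G.Adj u t ∧ ¬ G.Adj v t := by
    intro t ht
    rw [hT'] at ht
    exact ⟨fun h => ht.2.2.1 h.symm, fun h => ht.2.2.2 h.symm⟩
  have hclique : ∀ l, G.IsClique (D l) := fun l a ha b hb hab =>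
    ((hDconn l a ha b hb).eq_or_adj_of_transitive (hfree.induce_adj_trans huv hT)).resolve_left
      (fun h => hab (congrArg Subtype.val h))
  have hdisj : Pairwise (Function.onFun Disjoint D) := fun m m' hmm' => hDdisj m m' hmm'
  have hsep : Pairwise fun m m' => ∀ a ∈ D m, ∀ b ∈ D m', ¬ G.Adj a b :=
    fun m m' hmm' a ha b hb hab =>
      Set.disjoint_left.mp (hDdisj m m' hmm') (hDclosed m a ha b (hDsub m' hb) hab) hb
  obtain ⟨k, hki, hkj⟩ := Fin.exists_ne_and_ne_of_two_lt i j (by omega)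
  obtain ⟨z, hz, hwz⟩ := hfree.exists_adj_of_adj_two_others hclique hdisj hsep hki hkj hij
    (hDbig k) hx hy hwx hwy
  intro l
  by_cases hli : l = i
  · subst hli
    exact hfree.semicomplete_of_adj_two_others hclique hdisj hsep hij hki.symm hkj.symm
      hy hz hwy hwz
  by_cases hlj : l = j
  · subst hlj
    exact hfree.semicomplete_of_adj_two_others hclique hdisj hsep hij.symm hkj.symm hki.symm
      hx hz hwx hwz
  exact hfree.semicomplete_of_adj_two_others hclique hdisj hsep hli hlj hij hx hy hwx hwy

/-- in a `(P₂+P₃)`-free graph with an edge `uv`, let `T'` be the vertices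
adjacent to neither `u` nor `v`, and let `D 0, …, D (p-1)` (`p ≥ 3`) be connected components
of `G[T']` each with at least two vertices. If a vertex `w ∉ T' ∪ {u,v}` has a
neighbour in `D i` and a neighbour in `D j` for some `i ≠ j`, then `w` is semi-complete to every `D j`:
adjacent to all vertices of `D j` except at most one. -/
theorem semi_complete_of_neighbours_in_two_components {V : Type*} (G : SimpleGraph V)
    (hfree : P2P3Free G) (u v : V) (huv : G.Adj u v)
    (T' : Set V) (hT' : T' = {x | x ≠ u ∧ x ≠ v ∧ ¬ G.Adj x u ∧ ¬ G.Adj x v})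
    (p : ℕ) (hp : 3 ≤ p) (D : Fin p → Set V)
    (hDsub : ∀ i, D i ⊆ T')
    (hDconn : ∀ i, ∀ x, ∀ hx : x ∈ D i, ∀ y, ∀ hy : y ∈ D i,
      (G.induce T').Reachable ⟨x, hDsub i hx⟩ ⟨y, hDsub i hy⟩)
    (hDclosed : ∀ i, ∀ x ∈ D i, ∀ y ∈ T', G.Adj x y → y ∈ D i)
    (hDdisj : ∀ i j, i ≠ j → Disjoint (D i) (D j))
    (hDbig : ∀ i, ∃ x ∈ D i, ∃ y ∈ D i, x ≠ y)
    (w : V) (hwT' : w ∉ T') (hwu : w ≠ u) (hwv : w ≠ v)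
    (i j : Fin p) (hij : i ≠ j) (x y : V) (hx : x ∈ D i) (hy : y ∈ D j)
    (hwx : G.Adj w x) (hwy : G.Adj w y) :
    ∀ l : Fin p, ∃ z : V, ∀ t ∈ D l, t ≠ z → G.Adj w t :=
  semi_complete_of_neighbours_in_two_components_general G hfree u v huv T' hT' p hp D hDsub hDconn
    hDclosed hDdisj hDbig w i j hij x y hx hy hwx hwy
end

section
/- Every 2-unipolar graph is weakly chordal: it contains no induced cycle C_s and no induced complement of a cycle C_s for any s ≥ 5. -/
/-!
Being 2-unipolar passes to induced subgraphs, so it suffices that neither `C_s` nor its complement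
is 2-unipolar for `s ≥ 5`. Let `S` be the part inducing a matching; its complement is a clique.

In `C_s` no three consecutive vertices lie in `S`, while a vertex `x ∉ S` is non-adjacent to
`x + 2` and `x + 3`, which therefore lie in `S`. Then `x + 1 ∉ S`, and applying this twice gives
`x + 2 ∉ S`, a contradiction.

In the complement, `S` meets every pair `{x, x + 1}`. It contains neither `{x, x + 2, x + 4}`
(then `x + 2` has the two `S`-neighbours `x`, `x + 4`) nor `{x, x + 1, x + 3}` (then `x + 3` has
the two `S`-neighbours `x`, `x + 1`). Together these force `S` to avoid consecutive vertices, so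
`S` is closed under `x ↦ x + 2`, which produces the forbidden `{x, x + 2, x + 4}`.
-/

/-- A graph is 2-unipolar if its vertex set partitions into `V₁`, `V₂` where `V₁` induces a
complete graph and `V₂` induces a disjoint union of complete graphs each of size at most 2
(equivalently, every vertex of `V₂` has at most one neighbour inside `V₂`). -/
def TwoUnipolar {V : Type*} (G : SimpleGraph V) : Prop :=
  ∃ V₁ V₂ : Set V, V₁ ∪ V₂ = Set.univ ∧ Disjoint V₁ V₂ ∧
    (∀ x ∈ V₁, ∀ y ∈ V₁, x ≠ y → G.Adj x y) ∧
    (∀ x ∈ V₂, ∀ y ∈ V₂, ∀ z ∈ V₂, G.Adj x y → G.Adj x z → y = z)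

open SimpleGraph Fin.CommRing

namespace TwoUnipolar

variable {V W : Type*} {G : SimpleGraph V}

theorem exists_isClique_compl (h : TwoUnipolar G) :
    ∃ S : Set V, G.IsClique Sᶜ ∧
      ∀ x ∈ S, ∀ y ∈ S, ∀ z ∈ S, G.Adj x y → G.Adj x z → y = z := by
  obtain ⟨V₁, V₂, hunion, -, hclique, hmatch⟩ := h
  have hV₁ : ∀ x ∉ V₂, x ∈ V₁ := fun x hx =>
    ((Set.mem_union x V₁ V₂).1 (hunion ▸ Set.mem_univ x)).resolve_right hx
  exact ⟨V₂, fun x hx y hy => hclique x (hV₁ x hx) y (hV₁ y hy), hmatch⟩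

theorem comap {H : SimpleGraph W} (h : TwoUnipolar G) (f : H ↪g G) : TwoUnipolar H := by
  obtain ⟨V₁, V₂, hunion, hdisj, hclique, hmatch⟩ := h
  refine ⟨f ⁻¹' V₁, f ⁻¹' V₂, by rw [← Set.preimage_union, hunion, Set.preimage_univ],
    hdisj.preimage f, fun x hx y hy hxy => ?_, fun x hx y hy z hz hxy hxz => ?_⟩
  · exact f.map_adj_iff.1 (hclique _ hx _ hy (f.injective.ne hxy))
  · exact f.injective (hmatch _ hx _ hy _ hz (f.map_adj_iff.2 hxy) (f.map_adj_iff.2 hxz))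

end TwoUnipolar

section CycleGraph

variable {n : ℕ}

theorem cycleGraph_adj_add_one (x : Fin (n + 2)) : (cycleGraph (n + 2)).Adj x (x + 1) :=
  cycleGraph_adj.2 (Or.inr (add_sub_cancel_left x 1))

theorem compl_cycleGraph_adj_add_iff (x d : Fin (n + 2)) :
    (cycleGraph (n + 2))ᶜ.Adj x (x + d) ↔ d ≠ 0 ∧ d ≠ 1 ∧ -d ≠ 1 := by
  simp [compl_adj, cycleGraph_adj, or_comm]

theorem compl_cycleGraph_adj_add_two (x : Fin (n + 4)) :
    (cycleGraph (n + 4))ᶜ.Adj x (x + 2) := by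
  rw [compl_cycleGraph_adj_add_iff]
  simp (disch := omega) [Fin.ext_iff, Fin.val_neg', Nat.mod_eq_of_lt]

theorem compl_cycleGraph_adj_add_three (x : Fin (n + 5)) :
    (cycleGraph (n + 5))ᶜ.Adj x (x + 3) := by
  rw [compl_cycleGraph_adj_add_iff]
  simp (disch := omega) [Fin.ext_iff, Fin.val_neg', Nat.mod_eq_of_lt]

end CycleGraph

theorem not_twoUnipolar_cycleGraph {s : ℕ} (hs : 5 ≤ s) : ¬TwoUnipolar (cycleGraph s) := by
  obtain ⟨n, rfl⟩ : ∃ n, s = n + 5 := ⟨s - 5, by omega⟩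
  intro h
  obtain ⟨S, hclique, hmatch⟩ := h.exists_isClique_compl
  have no_path : ∀ x, x ∈ S → x + 1 ∈ S → x + 2 ∈ S → False := by
    intro x hx hx₁ hx₂
    have hx₁₂ : (cycleGraph (n + 5)).Adj (x + 1) (x + 2) := by
      rw [show x + 2 = x + 1 + 1 by ring]
      exact cycleGraph_adj_add_one (x + 1)
    exact (compl_cycleGraph_adj_add_two x).1
      (hmatch _ hx₁ _ hx _ hx₂ (cycleGraph_adj_add_one x).symm hx₁₂)
  have far : ∀ x ∉ S, x + 2 ∈ S ∧ x + 3 ∈ S := by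
    intro x hx
    constructor <;> by_contra hy
    · have hadj := compl_cycleGraph_adj_add_two x
      exact hadj.2 (hclique hx hy hadj.1)
    · have hadj := compl_cycleGraph_adj_add_three x
      exact hadj.2 (hclique hx hy hadj.1)
  have step : ∀ x ∉ S, x + 1 ∉ S := by
    intro x hx hx₁
    refine no_path (x + 1) hx₁ ?_ ?_
    · rw [show x + 1 + 1 = x + 2 by ring]
      exact (far x hx).1
    · rw [show x + 1 + 2 = x + 3 by ring]
      exact (far x hx).2
  obtain ⟨x, hx⟩ : ∃ x, x ∉ S := by
    by_contra! hS
    exact no_path 0 (hS _) (hS _) (hS _)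
  refine step (x + 1) (step x hx) ?_
  rw [show x + 1 + 1 = x + 2 by ring]
  exact (far x hx).1

theorem not_twoUnipolar_compl_cycleGraph {s : ℕ} (hs : 5 ≤ s) :
    ¬TwoUnipolar (cycleGraph s)ᶜ := by
  obtain ⟨n, rfl⟩ : ∃ n, s = n + 5 := ⟨s - 5, by omega⟩
  intro h
  obtain ⟨S, hclique, hmatch⟩ := h.exists_isClique_compl
  have add_two_add_two (x : Fin (n + 5)) : x + 2 + 2 = x + 4 := by ring
  have cover : ∀ x, x ∈ S ∨ x + 1 ∈ S := by
    intro x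
    by_contra! hx
    have hadj := cycleGraph_adj_add_one x
    exact ((compl_adj _ _ _).1 (hclique hx.1 hx.2 hadj.ne)).2 hadj
  have no_skip : ∀ x, x ∈ S → x + 2 ∈ S → x + 4 ∈ S → False := by
    intro x hx hx₂ hx₄
    have h4 : x ≠ x + 4 := by simp (disch := omega) [Fin.ext_iff, Nat.mod_eq_of_lt]
    refine h4 (hmatch _ hx₂ _ hx _ hx₄ (compl_cycleGraph_adj_add_two x).symm ?_)
    rw [← add_two_add_two]
    exact compl_cycleGraph_adj_add_two (x + 2)
  have no_hook : ∀ x, x ∈ S → x + 1 ∈ S → x + 3 ∈ S → False := by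
    intro x hx hx₁ hx₃
    refine (cycleGraph_adj_add_one x).ne
      (hmatch _ hx₃ _ hx _ hx₁ (compl_cycleGraph_adj_add_three x).symm ?_)
    rw [show x + 3 = x + 1 + 2 by ring]
    exact (compl_cycleGraph_adj_add_two (x + 1)).symm
  have gap : ∀ x ∈ S, x + 1 ∉ S := by
    intro x hx hx₁
    have hx₃ : x + 3 ∉ S := no_hook x hx hx₁
    have hx₂ : x + 2 ∈ S :=
      (cover (x + 2)).resolve_right (by rwa [show x + 2 + 1 = x + 3 by ring])
    have hx₄ : x + 4 ∈ S := by
      rw [show x + 4 = x + 3 + 1 by ring]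
      exact (cover (x + 3)).resolve_left hx₃
    exact no_skip x hx hx₂ hx₄
  have skip : ∀ x ∈ S, x + 2 ∈ S := by
    intro x hx
    rw [show x + 2 = x + 1 + 1 by ring]
    exact (cover (x + 1)).resolve_left (gap x hx)
  obtain ⟨x, hx⟩ : ∃ x, x ∈ S := (cover 0).elim (⟨0, ·⟩) (⟨0 + 1, ·⟩)
  exact no_skip x hx (skip x hx) (add_two_add_two x ▸ skip _ (skip x hx))

/-- every 2-unipolar graph is weakly chordal: for every `s ≥ 5` it has no
induced cycle `C_s` and no induced complement of `C_s`. -/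
theorem twoUnipolar_weakly_chordal {V : Type*} (G : SimpleGraph V) (h : TwoUnipolar G) :
    ∀ s : ℕ, 5 ≤ s →
      IsEmpty (SimpleGraph.cycleGraph s ↪g G) ∧
      IsEmpty ((SimpleGraph.cycleGraph s)ᶜ ↪g G) :=
  fun _ hs => ⟨⟨fun f => not_twoUnipolar_cycleGraph hs (h.comap f)⟩,
    ⟨fun f => not_twoUnipolar_compl_cycleGraph hs (h.comap f)⟩⟩
end

section
/- Let G be a graph, T ⊆ V(G), and A ⊆ V(G). Let X, W ⊆ A be T-independent sets such that X ∩ T and W ∩ T are 1-neighbour equivalent with respect to A, and X \ T and W \ T are 1-neighbour equivalent with respect to A. Then for every Y ⊆ V(G) \ A, the set X ∪ Y is a T-independent set if and only if W ∪ Y is a T-independent set. -/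
/-- A set `Z` is a `T`-independent set of `G` if `G[Z]` has no edge incident to `T ∩ Z`. -/
def TIndep {V : Type*} (G : SimpleGraph V) (T Z : Set V) : Prop :=
  ∀ x ∈ Z, ∀ y ∈ Z, G.Adj x y → x ∉ T ∧ y ∉ T

/-- Sets `P, Q ⊆ A` are 1-neighbour equivalent w.r.t. `A`: every vertex outside `A` has a
neighbour in `P` iff it has one in `Q`. -/
def OneNeighbourEquiv {V : Type*} (G : SimpleGraph V) (A P Q : Set V) : Prop :=
  ∀ v ∉ A, ((∃ p ∈ P, G.Adj v p) ↔ (∃ q ∈ Q, G.Adj v q))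

/- Whether `y` may join a `T`-independent set `Z` only depends on whether `y` has a neighbour
in `Z ∩ T` and whether it has one in `Z \ T`; outside `A` both are fixed by 1-neighbour
equivalence, so `X` and `W` admit the same extensions `Y ⊆ V \ A`. -/

namespace TIndep

variable {V : Type*} {G : SimpleGraph V} {T : Set V}

theorem union_iff {Y Z : Set V} :
    TIndep G T (Z ∪ Y) ↔
      TIndep G T Z ∧ TIndep G T Y ∧ ∀ y ∈ Y, ∀ z ∈ Z, G.Adj y z → y ∉ T ∧ z ∉ T := by
  constructor
  · intro h
    exact ⟨fun x hx y hy => h x (.inl hx) y (.inl hy), fun x hx y hy => h x (.inr hx) y (.inr hy),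
      fun y hy z hz => h y (.inr hy) z (.inl hz)⟩
  · rintro ⟨hZ, hY, hYZ⟩ x (hxZ | hxY) y (hyZ | hyY) hxy
    · exact hZ x hxZ y hyZ hxy
    · exact (hYZ y hyY x hxZ hxy.symm).symm
    · exact hYZ x hxY y hyZ hxy
    · exact hY x hxY y hyY hxy

theorem forall_adj_notMem_iff {Z : Set V} {y : V} :
    (∀ z ∈ Z, G.Adj y z → y ∉ T ∧ z ∉ T) ↔
      (¬∃ z ∈ Z ∩ T, G.Adj y z) ∧ (y ∈ T → ¬∃ z ∈ Z \ T, G.Adj y z) := by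
  constructor
  · intro h
    exact ⟨fun ⟨z, ⟨hz, hzT⟩, hyz⟩ => (h z hz hyz).2 hzT,
      fun hyT ⟨z, ⟨hz, _⟩, hyz⟩ => (h z hz hyz).1 hyT⟩
  · rintro ⟨hZT, hZT'⟩ z hz hyz
    by_cases hzT : z ∈ T
    · exact absurd ⟨z, ⟨hz, hzT⟩, hyz⟩ hZT
    · exact ⟨fun hyT => hZT' hyT ⟨z, ⟨hz, hzT⟩, hyz⟩, hzT⟩

end TIndep

theorem tIndep_union_iff_of_oneNeighbourEquiv_general {V : Type*} (G : SimpleGraph V)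
    (T A X W : Set V)
    (hXind : TIndep G T X) (hWind : TIndep G T W)
    (h1 : OneNeighbourEquiv G A (X ∩ T) (W ∩ T))
    (h2 : OneNeighbourEquiv G A (X \ T) (W \ T)) :
    ∀ Y : Set V, Y ⊆ Aᶜ → (TIndep G T (X ∪ Y) ↔ TIndep G T (W ∪ Y)) := by
  intro Y hY
  have cross_iff : ∀ y ∈ Y, (∀ x ∈ X, G.Adj y x → y ∉ T ∧ x ∉ T) ↔
      (∀ w ∈ W, G.Adj y w → y ∉ T ∧ w ∉ T) := by
    intro y hy
    rw [TIndep.forall_adj_notMem_iff, TIndep.forall_adj_notMem_iff, h1 y (hY hy), h2 y (hY hy)]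
  simp only [TIndep.union_iff, hXind, hWind, true_and]
  exact and_congr_right fun _ => forall₂_congr cross_iff

/-- if `X, W ⊆ A` are `T`-independent sets with `X ∩ T ≡¹_A W ∩ T` and
`X \ T ≡¹_A W \ T`, then for every `Y ⊆ V \ A`, `X ∪ Y` is a `T`-independent set iff
`W ∪ Y` is. -/
theorem tIndep_union_iff_of_oneNeighbourEquiv {V : Type*} (G : SimpleGraph V)
    (T A X W : Set V) (hX : X ⊆ A) (hW : W ⊆ A)
    (hXind : TIndep G T X) (hWind : TIndep G T W)
    (h1 : OneNeighbourEquiv G A (X ∩ T) (W ∩ T))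
    (h2 : OneNeighbourEquiv G A (X \ T) (W \ T)) :
    ∀ Y : Set V, Y ⊆ Aᶜ → (TIndep G T (X ∪ Y) ↔ TIndep G T (W ∪ Y)) :=
  tIndep_union_iff_of_oneNeighbourEquiv_general G T A X W hXind hWind h1 h2
end

section
/- Let G be a graph, T ⊆ V(G), and let A, B ⊆ V(G) be disjoint with A ∪ B = C. Suppose 𝒜 ⊆ 2^A represents 2^A (i.e., best(𝒜,Y) = best(2^A, Y) for all Y ⊆ V(G)\A) and ℬ ⊆ 2^B represents 2^B. Then 𝒜 ⊗ ℬ := { X ∪ W : X ∈ 𝒜, W ∈ ℬ } represents 2^C, i.e., best(𝒜 ⊗ ℬ, Y) = best(2^C, Y) for all Y ⊆ V(G) \ C. -/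
/-- `best 𝒜 Y` is the maximum weight `ω(X)` over `X ∈ 𝒜` with `X ∪ Y` a `T`-independent
set, valued in `EReal` so that the empty maximum is `-∞`. -/
noncomputable def best {V : Type*} [DecidableEq V] (G : SimpleGraph V) (T : Set V)
    (ω : V → ℝ) (𝒜 : Set (Finset V)) (Y : Finset V) : EReal :=
  sSup ((fun X : Finset V => ((∑ x ∈ X, ω x : ℝ) : EReal)) ''
    {X | X ∈ 𝒜 ∧ TIndep G T (↑(X ∪ Y))})

/-!
Split any `Z ⊆ C` compatible with `Y` as `Z_A = Z ∩ A` and `Z_B = Z \ A ⊆ B`. Because `𝒜`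
represents `2^A`, `ω(Z_A)` is matched by some `X ∈ 𝒜` compatible with `Z_B ∪ Y`; because `ℬ`
represents `2^B`, `ω(Z_B)` is then matched by some `W ∈ ℬ` compatible with `X ∪ Y`, and
`X ∪ W ∈ 𝒜 ⊗ ℬ` is compatible with `Y`. Since the suprema need not be attained, the argument is
run with the inequality `ω(X) + best(ℬ, X ∪ Y) ≤ best(𝒜 ⊗ ℬ, Y)` in place of the choice of `W`,
and likewise for `X`.
-/

theorem Finset.coe_subset_compl_coe_iff_disjoint {α : Type*} {s t : Finset α} :
    (↑s : Set α) ⊆ (↑t)ᶜ ↔ Disjoint s t := by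
  rw [Set.subset_compl_iff_disjoint_right, Finset.disjoint_coe]

section

variable {V : Type*} [DecidableEq V] {G : SimpleGraph V} {T : Set V} {ω : V → ℝ}
  {𝒮 𝒮' : Set (Finset V)} {X Y : Finset V}

theorem best_mono (h : 𝒮 ⊆ 𝒮') : best G T ω 𝒮 Y ≤ best G T ω 𝒮' Y :=
  sSup_le_sSup <| Set.image_mono fun _ ⟨hX, hind⟩ => ⟨h hX, hind⟩

theorem le_best (hX : X ∈ 𝒮) (hind : TIndep G T ↑(X ∪ Y)) :
    ((∑ x ∈ X, ω x : ℝ) : EReal) ≤ best G T ω 𝒮 Y :=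
  le_sSup ⟨X, ⟨hX, hind⟩, rfl⟩

theorem best_add_le {c : ℝ} {m : EReal}
    (h : ∀ X ∈ 𝒮, TIndep G T ↑(X ∪ Y) → ((∑ x ∈ X, ω x : ℝ) : EReal) + c ≤ m) :
    best G T ω 𝒮 Y + c ≤ m := by
  have hc_bot : (c : EReal) ≠ ⊥ ∨ m ≠ ⊥ := .inl (EReal.coe_ne_bot c)
  have hc_top : (c : EReal) ≠ ⊤ ∨ m ≠ ⊤ := .inl (EReal.coe_ne_top c)
  rw [← EReal.le_sub_iff_add_le hc_bot hc_top]
  refine sSup_le ?_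
  rintro _ ⟨X, ⟨hX, hind⟩, rfl⟩
  exact (EReal.le_sub_iff_add_le hc_bot hc_top).2 (h X hX hind)

theorem best_le {m : EReal}
    (h : ∀ X ∈ 𝒮, TIndep G T ↑(X ∪ Y) → ((∑ x ∈ X, ω x : ℝ) : EReal) ≤ m) :
    best G T ω 𝒮 Y ≤ m :=
  sSup_le fun _ ⟨X, ⟨hX, hind⟩, hm⟩ => hm ▸ h X hX hind

theorem add_best_le_best_tensor {𝒜 ℬ : Set (Finset V)} (hX : X ∈ 𝒜)
    (hdisj : ∀ W ∈ ℬ, Disjoint X W) :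
    ((∑ x ∈ X, ω x : ℝ) : EReal) + best G T ω ℬ (X ∪ Y) ≤
      best G T ω {Z | ∃ X ∈ 𝒜, ∃ W ∈ ℬ, Z = X ∪ W} Y := by
  rw [add_comm]
  refine best_add_le fun W hW hind => ?_
  rw [← EReal.coe_add, add_comm, ← Finset.sum_union (hdisj W hW)]
  refine le_best ⟨X, hX, W, hW, rfl⟩ ?_
  rwa [Finset.union_comm X W, Finset.union_assoc]

end

/-- if `A` and `B` are disjoint, `𝒜 ⊆ 2^A` represents `2^A` and `ℬ ⊆ 2^B`
represents `2^B`, then `𝒜 ⊗ ℬ = {X ∪ W : X ∈ 𝒜, W ∈ ℬ}` represents `2^C` for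
`C = A ∪ B`. -/
theorem tensor_represents {V : Type*} [DecidableEq V] (G : SimpleGraph V) (T : Set V)
    (ω : V → ℝ) (A B C : Finset V) (hdisj : Disjoint A B) (hC : C = A ∪ B)
    (𝒜 ℬ : Set (Finset V))
    (h𝒜sub : ∀ X ∈ 𝒜, X ⊆ A) (hℬsub : ∀ W ∈ ℬ, W ⊆ B)
    (h𝒜rep : ∀ Y : Finset V, ↑Y ⊆ (↑A : Set V)ᶜ →
      best G T ω 𝒜 Y = best G T ω {X | X ⊆ A} Y)
    (hℬrep : ∀ Y : Finset V, ↑Y ⊆ (↑B : Set V)ᶜ →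
      best G T ω ℬ Y = best G T ω {W | W ⊆ B} Y) :
    ∀ Y : Finset V, ↑Y ⊆ (↑C : Set V)ᶜ →
      best G T ω {Z | ∃ X ∈ 𝒜, ∃ W ∈ ℬ, Z = X ∪ W} Y = best G T ω {Z | Z ⊆ C} Y := by
  intro Y hY
  subst hC
  simp only [Finset.coe_subset_compl_coe_iff_disjoint] at hY h𝒜rep hℬrep
  obtain ⟨hYA, hYB⟩ := Finset.disjoint_union_right.1 hY
  apply le_antisymm
  · exact best_mono fun Z ⟨X, hX, W, hW, hZ⟩ =>
      hZ ▸ Finset.union_subset_union (h𝒜sub X hX) (hℬsub W hW)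
  refine best_le fun Z (hZ : Z ⊆ A ∪ B) hind => ?_
  calc ((∑ x ∈ Z, ω x : ℝ) : EReal)
      = ((∑ x ∈ Z ∩ A, ω x : ℝ) : EReal) + ((∑ x ∈ Z \ A, ω x : ℝ) : EReal) := by
        rw [← EReal.coe_add, Finset.sum_inter_add_sum_sdiff]
    _ ≤ best G T ω 𝒜 (Z \ A ∪ Y) + ((∑ x ∈ Z \ A, ω x : ℝ) : EReal) := by
        gcongr
        rw [h𝒜rep _ (Finset.disjoint_union_left.2 ⟨Finset.sdiff_disjoint, hYA⟩)]
        refine le_best Finset.inter_subset_right ?_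
        rwa [← Finset.union_assoc, Finset.union_comm (Z ∩ A), Finset.sdiff_union_inter]
    _ ≤ _ := best_add_le fun X hX hXind => calc
        ((∑ x ∈ X, ω x : ℝ) : EReal) + ((∑ x ∈ Z \ A, ω x : ℝ) : EReal)
            ≤ ((∑ x ∈ X, ω x : ℝ) : EReal) + best G T ω ℬ (X ∪ Y) := by
          gcongr
          rw [hℬrep _ (Finset.disjoint_union_left.2 ⟨hdisj.mono_left (h𝒜sub X hX), hYB⟩)]
          exact le_best (sdiff_le_iff.2 hZ) (by rwa [Finset.union_left_comm])
        _ ≤ _ := add_best_le_best_tensor hX fun W hW => hdisj.mono (h𝒜sub X hX) (hℬsub W hW)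
end
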